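/- Let $\mathcal{F}$ be an IFS of contractions with Lipschitz constants $L_i \in (0,1)$ over a complete metric space whose attractor $K$ is connected, has positive diameter, and such that $\mathcal{F}$ has no branching. Then for every $n$ and all words $w, u \in A^n$, the intersection $\phi_w(K) \cap \phi_u(K)$ contains at most one point. -/

import Mathlib

/-! Suppose two distinct points `x, y` lie in both `φ_w(K)` and `φ_u(K)`, and pass to a
generation so deep that no cylinder contains both. The subcylinders of the connected set
`φ_w(K)` form a connected intersection graph, and so do those of `φ_u(K)`; a path from the piece
at `x` to the piece at `y` inside `w`, followed by one back inside `u`, is a cycle in the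
intersection graph of cylinders. Prefixing a letter `i` copies the cycle into the next
generation, whose intersection graph is connected because `K` is. With no branching every vertex
has degree at most two, so a cycle in a connected graph is the whole graph; but the copy misses
every cylinder beginning with a letter `j ≠ i`. -/

open Set

/-- `φ_w = φ_{i₁} ∘ ⋯ ∘ φ_{iₙ}` for a word `w = i₁ ⋯ iₙ`. -/
noncomputable def compWord {X : Type*} {k : ℕ} (φ : Fin k → X → X)
    (w : List (Fin k)) : X → X :=
  w.foldr (fun i g => φ i ∘ g) id

open scoped NNReal

theorem IsPreconnected.reflTransGen_inter_nonempty {α ι : Type*} [TopologicalSpace α] [Finite ι]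
    {s : ι → Set α} (H : IsPreconnected (⋃ i, s i)) (hcl : ∀ i, IsClosed (s i))
    (hne : ∀ i, (s i).Nonempty) (i j : ι) :
    Relation.ReflTransGen (fun i j => (s i ∩ s j).Nonempty) i j := by
  by_contra hij
  set S : Set ι := {j | Relation.ReflTransGen (fun i j => (s i ∩ s j).Nonempty) i j}
  have hcover : (⋃ i, s i) ⊆ (⋃ a ∈ S, s a) ∪ ⋃ a ∈ Sᶜ, s a := by
    rw [← biUnion_union, union_compl_self, biUnion_univ]
  obtain ⟨z, -, hzS, hzSc⟩ := isPreconnected_closed_iff.mp H _ _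
    (S.toFinite.isClosed_biUnion fun a _ => hcl a) (Sᶜ.toFinite.isClosed_biUnion fun a _ => hcl a)
    hcover ((hne i).mono fun z hz => ⟨mem_iUnion_of_mem i hz, mem_biUnion .refl hz⟩)
    ((hne j).mono fun z hz => ⟨mem_iUnion_of_mem j hz, mem_biUnion hij hz⟩)
  obtain ⟨a, haS, hza⟩ := mem_iUnion₂.mp hzS
  obtain ⟨b, hbS, hzb⟩ := mem_iUnion₂.mp hzSc
  exact hbS (.tail haS ⟨z, hza, hzb⟩)

theorem exists_lipschitzWith_lt_one {ι X : Type*} [Fintype ι] [PseudoMetricSpace X]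
    {φ : ι → X → X} {L : ι → ℝ} (hL : ∀ i, L i < 1)
    (hLip : ∀ i x y, dist (φ i x) (φ i y) ≤ L i * dist x y) :
    ∃ Λ : ℝ≥0, Λ < 1 ∧ ∀ i, LipschitzWith Λ (φ i) := by
  refine ⟨Finset.univ.sup fun i => (L i).toNNReal,
    (Finset.sup_lt_iff zero_lt_one).mpr fun i _ => Real.toNNReal_lt_one.mpr (hL i),
    fun i => LipschitzWith.of_dist_le_mul fun x y => (hLip i x y).trans ?_⟩
  gcongr
  exact (Real.le_coe_toNNReal _).trans
    (NNReal.coe_le_coe.mpr (Finset.le_sup (f := fun i => (L i).toNNReal) (Finset.mem_univ i)))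

namespace SimpleGraph

variable {V : Type*} {G : SimpleGraph V}

theorem Walk.isCycle_cons_append_cons_reverse {a b c d : V} {p : G.Walk a c} {q : G.Walk b d}
    (hp : p.IsPath) (hq : q.IsPath) (hpq : p.support.Disjoint q.support) (hac : a ≠ c)
    (hab : G.Adj a b) (hcd : G.Adj c d) :
    (Walk.cons hab.symm (p.append (Walk.cons hcd q.reverse))).IsCycle := by
  have hb : b ∉ p.support := fun h => hpq h q.start_mem_support
  have hc : c ∉ q.support := fun h => hpq p.end_mem_support h
  refine (Walk.cons_isCycle_iff _ _).mpr ⟨?_, ?_⟩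
  · rw [Walk.isPath_def, Walk.support_append, Walk.support_cons, List.tail_cons,
      Walk.support_reverse, List.nodup_append]
    exact ⟨hp.support_nodup, List.nodup_reverse.mpr hq.support_nodup,
      fun x hx y hy => by rintro rfl; exact hpq hx (List.mem_reverse.mp hy)⟩
  · rw [Walk.edges_append, Walk.edges_cons, Walk.edges_reverse]
    simp only [List.mem_append, List.mem_cons, List.mem_reverse, Sym2.eq_iff]
    rintro (h | (⟨rfl, rfl⟩ | ⟨-, rfl⟩) | h)
    · exact hb (p.fst_mem_support_of_mem_edges h)
    · exact hc q.start_mem_support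
    · exact hac rfl
    · exact hpq p.start_mem_support (q.snd_mem_support_of_mem_edges h)

theorem Walk.IsCycle.neighborSet_subset_support {u v : V} {c : G.Walk u u} (hc : c.IsCycle)
    (hv : v ∈ c.support) (hdeg : (G.neighborSet v).encard ≤ 2) :
    G.neighborSet v ⊆ {w | w ∈ c.support} := by
  have hsub : c.toSubgraph.neighborSet v ⊆ G.neighborSet v := fun w h => c.toSubgraph.adj_sub h
  have hfin : (G.neighborSet v).Finite := finite_of_encard_le_coe hdeg
  have heq : c.toSubgraph.neighborSet v = G.neighborSet v := by
    refine hfin.eq_of_subset_of_encard_le' hsub ?_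
    rw [← (hfin.subset hsub).cast_ncard_eq, hc.ncard_neighborSet_toSubgraph_eq_two hv]
    exact hdeg
  rw [← heq]
  exact fun w h => Walk.mem_support_of_adj_toSubgraph h.symm

theorem Walk.IsCycle.mem_support_of_reachable {u v w : V} {c : G.Walk u u} (hc : c.IsCycle)
    (hdeg : ∀ v, (G.neighborSet v).encard ≤ 2) (hv : v ∈ c.support) (hvw : G.Reachable v w) :
    w ∈ c.support := by
  obtain ⟨p⟩ := hvw
  induction p with
  | nil => exact hv
  | cons h p ih => exact ih (hc.neighborSet_subset_support hv (hdeg _) h)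

end SimpleGraph

section IFS

variable {X : Type*} {k : ℕ} (φ : Fin k → X → X)

theorem compWord_nil : compWord φ [] = id := rfl

theorem compWord_cons (i : Fin k) (w : List (Fin k)) :
    compWord φ (i :: w) = φ i ∘ compWord φ w := rfl

theorem compWord_append (v w : List (Fin k)) :
    compWord φ (v ++ w) = compWord φ v ∘ compWord φ w := by
  induction v with
  | nil => rfl
  | cons i v ih => rw [List.cons_append, compWord_cons, compWord_cons, ih, Function.comp_assoc]

theorem continuous_compWord [TopologicalSpace X] (hφ : ∀ i, Continuous (φ i))
    (w : List (Fin k)) : Continuous (compWord φ w) := by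
  induction w with
  | nil => exact continuous_id
  | cons i w ih => exact (hφ i).comp ih

theorem lipschitzWith_compWord [PseudoEMetricSpace X] {Λ : ℝ≥0}
    (hφ : ∀ i, LipschitzWith Λ (φ i)) (w : List (Fin k)) :
    LipschitzWith (Λ ^ w.length) (compWord φ w) := by
  induction w with
  | nil => simpa [compWord_nil] using LipschitzWith.id
  | cons i w ih =>
    rw [compWord_cons, List.length_cons, pow_succ']
    exact (hφ i).comp ih

variable {K : Set X}

theorem image_compWord_subset (hK : ∀ i, φ i '' K ⊆ K) (w : List (Fin k)) :
    compWord φ w '' K ⊆ K := by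
  induction w with
  | nil => simp [compWord_nil]
  | cons i w ih =>
    rw [compWord_cons, image_comp]
    exact (image_mono ih).trans (hK i)

theorem image_compWord_eq_iUnion (hK : K = ⋃ i, φ i '' K) (w : List (Fin k)) (m : ℕ) :
    compWord φ w '' K = ⋃ a : List.Vector (Fin k) m, compWord φ (w ++ a.toList) '' K := by
  have hcover : ∀ m, ∀ z ∈ K,
      ∃ a : List.Vector (Fin k) m, z ∈ compWord φ a.toList '' K := by
    intro m
    induction m with
    | zero => exact fun z hz => ⟨List.Vector.nil, z, hz, rfl⟩
    | succ m ih =>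
      intro z hz
      rw [hK] at hz
      obtain ⟨i, z', hz', rfl⟩ := mem_iUnion.mp hz
      obtain ⟨a, ha⟩ := ih z' hz'
      refine ⟨a.cons i, ?_⟩
      rw [List.Vector.toList_cons, compWord_cons, image_comp]
      exact mem_image_of_mem _ ha
  simp_rw [compWord_append, image_comp]
  refine Subset.antisymm ?_ (iUnion_subset fun a => image_mono
    (image_compWord_subset φ (fun i => (subset_iUnion (fun i => φ i '' K) i).trans hK.ge) _))
  rintro _ ⟨z, hz, rfl⟩
  obtain ⟨a, ha⟩ := hcover m z hz
  exact mem_iUnion.mpr ⟨a, mem_image_of_mem _ ha⟩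

theorem exists_mem_image_compWord_append (hK : K = ⋃ i, φ i '' K) {v : List (Fin k)} (m : ℕ)
    {z : X} (hz : z ∈ compWord φ v '' K) :
    ∃ a : List (Fin k), a.length = m ∧ z ∈ compWord φ (v ++ a) '' K := by
  rw [image_compWord_eq_iUnion φ hK v m] at hz
  obtain ⟨a, ha⟩ := mem_iUnion.mp hz
  exact ⟨a.toList, a.2, ha⟩

theorem exists_forall_dist_lt_of_length_le [PseudoMetricSpace X] {Λ : ℝ≥0} (hΛ : Λ < 1)
    (hφ : ∀ i, LipschitzWith Λ (φ i)) (hK : Bornology.IsBounded K) {ε : ℝ} (hε : 0 < ε) :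
    ∃ N, ∀ w : List (Fin k), N ≤ w.length →
      ∀ p ∈ compWord φ w '' K, ∀ q ∈ compWord φ w '' K, dist p q < ε := by
  have hlim : Filter.Tendsto (fun N => (Λ : ℝ) ^ N * Metric.diam K) Filter.atTop (nhds 0) := by
    simpa using (tendsto_pow_atTop_nhds_zero_of_lt_one Λ.2 hΛ).mul_const (Metric.diam K)
  obtain ⟨N, hN⟩ := (hlim.eventually (gt_mem_nhds hε)).exists
  refine ⟨N, fun w hw => ?_⟩
  rintro _ ⟨p, hp, rfl⟩ _ ⟨q, hq, rfl⟩
  calc dist (compWord φ w p) (compWord φ w q) ≤ (Λ : ℝ) ^ w.length * dist p q := by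
        simpa using (lipschitzWith_compWord φ hφ w).dist_le_mul p q
    _ ≤ (Λ : ℝ) ^ N * Metric.diam K :=
        mul_le_mul (pow_le_pow_of_le_one Λ.2 hΛ.le hw) (Metric.dist_le_diam_of_mem hK hp hq)
          dist_nonneg (by positivity)
    _ < ε := hN

-- Written so that `neighborSet v` is literally the set bounded in the no-branching condition.
def cylinderGraph (K : Set X) : SimpleGraph (List (Fin k)) where
  Adj v w :=
    w.length = v.length ∧ w ≠ v ∧ (compWord φ w '' K ∩ compWord φ v '' K).Nonempty
  symm := ⟨fun _ _ h => ⟨h.1.symm, h.2.1.symm, inter_comm (compWord φ _ '' K) _ ▸ h.2.2⟩⟩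
  loopless := ⟨fun _ h => h.2.1 rfl⟩

namespace cylinderGraph

theorem neighborSet_finite (v : List (Fin k)) : ((cylinderGraph φ K).neighborSet v).Finite :=
  (List.finite_length_eq (Fin k) v.length).subset fun _ h => h.1

theorem adj_of_length_eq {v w : List (Fin k)} (hlen : v.length = w.length) (hne : v ≠ w)
    (h : (compWord φ v '' K ∩ compWord φ w '' K).Nonempty) : (cylinderGraph φ K).Adj v w :=
  ⟨hlen.symm, hne.symm, inter_comm (compWord φ v '' K) _ ▸ h⟩

def consHom (i : Fin k) : cylinderGraph φ K →g cylinderGraph φ K where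
  toFun := List.cons i
  map_rel' {_ _} h := ⟨by simp [h.1], by simpa using h.2.1, by
    simp only [compWord_cons, image_comp]
    exact (h.2.2.image (φ i)).mono (image_inter_subset _ _ _)⟩

variable [TopologicalSpace X] [T2Space X]

theorem exists_isPath_forall_prefix (hK : K = ⋃ i, φ i '' K) (hKc : IsCompact K)
    (hconn : IsConnected K) (hφ : ∀ i, Continuous (φ i))
    (w : List (Fin k)) {a c : List (Fin k)} (hac : a.length = c.length) :
    ∃ p : (cylinderGraph φ K).Walk (w ++ a) (w ++ c),
      p.IsPath ∧ ∀ v ∈ p.support, w <+: v := by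
  have hchain := IsPreconnected.reflTransGen_inter_nonempty
    (s := fun t : List.Vector (Fin k) a.length => compWord φ (w ++ t.toList) '' K)
    (image_compWord_eq_iUnion φ hK w _ ▸ hconn.isPreconnected.image _
      (continuous_compWord φ hφ w).continuousOn)
    (fun _ => (hKc.image (continuous_compWord φ hφ _)).isClosed) (fun _ => hconn.nonempty.image _)
    ⟨a, rfl⟩ ⟨c, hac.symm⟩
  have hreach : ((cylinderGraph φ K).comap (w ++ ·)).Reachable a c := by
    rw [SimpleGraph.reachable_iff_reflTransGen]
    refine hchain.lift' List.Vector.toList fun b b' hbb' => ?_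
    by_cases h : b.toList = b'.toList
    · show Relation.ReflTransGen _ b.toList b'.toList
      rw [h]
    · exact .single (adj_of_length_eq φ (by simp) (fun h' => h (List.append_cancel_left h')) hbb')
  obtain ⟨p⟩ := hreach
  let q := p.bypass.map (SimpleGraph.Hom.comap (w ++ ·) (cylinderGraph φ K))
  have hq : ∀ v ∈ q.support, w <+: v := by
    simp only [q, SimpleGraph.Walk.support_map, List.mem_map]
    rintro _ ⟨t, -, rfl⟩
    exact List.prefix_append w t
  exact ⟨q, p.bypass_isPath.map fun _ _ h => List.append_cancel_left h, hq⟩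

theorem reachable_of_length_eq (hK : K = ⋃ i, φ i '' K) (hKc : IsCompact K)
    (hconn : IsConnected K) (hφ : ∀ i, Continuous (φ i))
    {v w : List (Fin k)} (h : v.length = w.length) : (cylinderGraph φ K).Reachable v w :=
  let ⟨p, _⟩ := exists_isPath_forall_prefix φ hK hKc hconn hφ [] h
  ⟨p⟩

theorem exists_isCycle (hK : K = ⋃ i, φ i '' K) (hKc : IsCompact K) (hconn : IsConnected K)
    (hφ : ∀ i, Continuous (φ i)) {w u a b c d : List (Fin k)} (hwu : w.length = u.length)
    (hne : w ≠ u) (hab : a.length = b.length) (hac : a.length = c.length)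
    (hbd : b.length = d.length) (hwac : w ++ a ≠ w ++ c)
    (hx : (compWord φ (w ++ a) '' K ∩ compWord φ (u ++ b) '' K).Nonempty)
    (hy : (compWord φ (w ++ c) '' K ∩ compWord φ (u ++ d) '' K).Nonempty) :
    ∃ (v : List (Fin k)) (p : (cylinderGraph φ K).Walk v v), p.IsCycle := by
  obtain ⟨pw, hpw, hpw_pre⟩ := exists_isPath_forall_prefix φ hK hKc hconn hφ w hac
  obtain ⟨pu, hpu, hpu_pre⟩ := exists_isPath_forall_prefix φ hK hKc hconn hφ u hbd
  have hdisj : pw.support.Disjoint pu.support := fun v hvw hvu => hne <|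
    (List.prefix_of_prefix_length_le (hpw_pre v hvw) (hpu_pre v hvu) hwu.le).eq_of_length hwu
  have hcross : ∀ {s t : List (Fin k)}, s.length = t.length →
      (compWord φ (w ++ s) '' K ∩ compWord φ (u ++ t) '' K).Nonempty →
      (cylinderGraph φ K).Adj (w ++ s) (u ++ t) := fun hst h =>
    adj_of_length_eq φ (by simp [hwu, hst]) (fun h' => hne (List.append_inj h' hwu).1) h
  exact ⟨_, _, SimpleGraph.Walk.isCycle_cons_append_cons_reverse hpw hpu hdisj hwac
    (hcross hab hx) (hcross (hac ▸ hab.trans hbd) hy)⟩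

theorem isAcyclic (hK : K = ⋃ i, φ i '' K) (hKc : IsCompact K) (hconn : IsConnected K)
    (hφ : ∀ i, Continuous (φ i))
    (hdeg : ∀ v, ((cylinderGraph φ K).neighborSet v).encard ≤ 2)
    {i j : Fin k} (hij : i ≠ j) : (cylinderGraph φ K).IsAcyclic := by
  intro v p hp
  -- The copy `i :: p` of the cycle would have to contain the vertex `j :: v` of its level.
  have hmem := (hp.map (f := consHom φ i) List.cons_injective).mem_support_of_reachable hdeg
    (SimpleGraph.Walk.start_mem_support _)
    (reachable_of_length_eq φ hK hKc hconn hφ (w := j :: v) rfl)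
  simp only [SimpleGraph.Walk.support_map, List.mem_map] at hmem
  obtain ⟨_, -, h⟩ := hmem
  exact hij (List.cons.inj h).1

end cylinderGraph

end IFS

theorem stmt12_general {X : Type*} [MetricSpace X] {k : ℕ}
    (φ : Fin k → X → X) (L : Fin k → ℝ)
    (hL : ∀ i, 0 < L i ∧ L i < 1)
    (hLip : ∀ i x y, dist (φ i x) (φ i y) ≤ L i * dist x y)
    (K : Set X) (hKc : IsCompact K)
    (hK : K = ⋃ i, φ i '' K) (hconn : IsConnected K)
    (hnb : ∀ (n : ℕ) (w : List (Fin k)), w.length = n →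
      {u : List (Fin k) | u.length = n ∧ u ≠ w ∧
        (compWord φ u '' K ∩ compWord φ w '' K).Nonempty}.ncard ≤ 2)
    (n : ℕ) (w u : List (Fin k)) (hw : w.length = n) (hu : u.length = n)
    (hne : w ≠ u) :
    (compWord φ w '' K ∩ compWord φ u '' K).Subsingleton := by
  intro x hx y hy
  by_contra hxy
  obtain ⟨Λ, hΛ, hφ⟩ := exists_lipschitzWith_lt_one (fun i => (hL i).2) hLip
  have hcont : ∀ i, Continuous (φ i) := fun i => (hφ i).continuous
  have hdeg : ∀ v, ((cylinderGraph φ K).neighborSet v).encard ≤ 2 := fun v => by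
    rw [← (cylinderGraph.neighborSet_finite φ v).cast_ncard_eq]
    exact_mod_cast hnb _ v rfl
  obtain ⟨i, j, hij⟩ : ∃ i j : Fin k, i ≠ j := by
    by_contra! h
    exact hne (List.ext_getElem (hw.trans hu.symm) fun _ _ _ => h _ _)
  obtain ⟨m, hm⟩ :=
    exists_forall_dist_lt_of_length_le φ hΛ hφ hKc.isBounded (dist_pos.mpr hxy)
  obtain ⟨a, ha, hxa⟩ := exists_mem_image_compWord_append φ hK m hx.1
  obtain ⟨b, hb, hxb⟩ := exists_mem_image_compWord_append φ hK m hx.2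
  obtain ⟨c, hc, hyc⟩ := exists_mem_image_compWord_append φ hK m hy.1
  obtain ⟨d, hd, hyd⟩ := exists_mem_image_compWord_append φ hK m hy.2
  have hac : w ++ a ≠ w ++ c := fun h =>
    (hm _ (by simp [ha]) x hxa y (h ▸ hyc)).false
  obtain ⟨v, p, hp⟩ := cylinderGraph.exists_isCycle φ hK hKc hconn hcont (hw.trans hu.symm) hne
    (ha.trans hb.symm) (ha.trans hc.symm) (hb.trans hd.symm) hac ⟨x, hxa, hxb⟩ ⟨y, hyc, hyd⟩
  exact cylinderGraph.isAcyclic φ hK hKc hconn hcont hdeg hij p hp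

/-- For an IFS with connected attractor of positive diameter and no branching, cylinders of
the same generation intersect in at most one point. -/
theorem stmt12 {X : Type*} [MetricSpace X] [CompleteSpace X] {k : ℕ}
    (φ : Fin k → X → X) (L : Fin k → ℝ)
    (hL : ∀ i, 0 < L i ∧ L i < 1)
    (hLip : ∀ i x y, dist (φ i x) (φ i y) ≤ L i * dist x y)
    (K : Set X) (hKne : K.Nonempty) (hKc : IsCompact K)
    (hK : K = ⋃ i, φ i '' K) (hconn : IsConnected K)
    (hdiam : 0 < Metric.diam K)
    (hnb : ∀ (n : ℕ) (w : List (Fin k)), w.length = n →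
      {u : List (Fin k) | u.length = n ∧ u ≠ w ∧
        (compWord φ u '' K ∩ compWord φ w '' K).Nonempty}.ncard ≤ 2)
    (n : ℕ) (w u : List (Fin k)) (hw : w.length = n) (hu : u.length = n)
    (hne : w ≠ u) :
    (compWord φ w '' K ∩ compWord φ u '' K).Subsingleton :=
  stmt12_general φ L hL hLip K hKc hK hconn hnb n w u hw hu hne
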